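/- arXiv:1801.02179 — 5 statements merged into one kernel-verified Lean document; each statement's English description precedes it below -/
import Mathlib

section
/- Let X be a complete CAT(0) space, f : X → (-∞,∞] convex, lsc, proper, and γ > 0. Then the resolvent J_γ is nonexpansive: d(J_γ x, J_γ y) ≤ d(x,y) for all x, y ∈ X. -/
set_option maxHeartbeats 1000000 in
/-- The resolvent J_γ of a convex lsc proper function on a complete
CAT(0) space is nonexpansive. -/
theorem stmt2
    {X : Type*} [MetricSpace X] [CompleteSpace X]
    -- geodesic convex-combination structure: `w x y t` is the point `(1-t)x + ty`
    (w : X → X → ℝ → X)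
    (hw1 : ∀ x y : X, ∀ t ∈ Set.Icc (0:ℝ) 1, dist x (w x y t) = t * dist x y)
    (hw2 : ∀ x y : X, ∀ t ∈ Set.Icc (0:ℝ) 1, dist y (w x y t) = (1-t) * dist x y)
    -- the CAT(0) inequality
    (hcat : ∀ x y z : X, ∀ t ∈ Set.Icc (0:ℝ) 1,
      dist z (w x y t)^2 ≤ (1-t) * dist z x^2 + t * dist z y^2 - t*(1-t) * dist x y^2)
    (f : X → EReal)
    -- f is convex, lower semicontinuous and proper (never -∞, somewhere finite)
    (hconv : ∀ x y : X, ∀ t ∈ Set.Icc (0:ℝ) 1,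
      f (w x y t) ≤ ((1 - t : ℝ) : EReal) * f x + ((t : ℝ) : EReal) * f y)
    (hlsc : LowerSemicontinuous f)
    (hproper : ∃ x, f x ≠ ⊤) (hbot : ∀ x, f x ≠ ⊥)
    -- J is the resolvent: J γ x minimizes y ↦ f(y) + (1/(2γ)) d(x,y)², uniquely
    (J : ℝ → X → X)
    (hJ : ∀ γ : ℝ, 0 < γ → ∀ x y : X,
      f (J γ x) + ((1/(2*γ) * dist x (J γ x)^2 : ℝ) : EReal) ≤
        f y + ((1/(2*γ) * dist x y^2 : ℝ) : EReal))
    (hJuniq : ∀ γ : ℝ, 0 < γ → ∀ x m : X,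
      (∀ y, f m + ((1/(2*γ) * dist x m^2 : ℝ) : EReal) ≤
        f y + ((1/(2*γ) * dist x y^2 : ℝ) : EReal)) → m = J γ x)
    (γ : ℝ) (hγ : 0 < γ) (x y : X) :
    dist (J γ x) (J γ y) ≤ dist x y := by
  obtain ⟨x₀, hx₀⟩ := hproper
  have hc : (0:ℝ) < 1/(2*γ) := by positivity
  -- Step 1: resolvent values are finite
  have hfin : ∀ u : X, ∃ r : ℝ, f (J γ u) = (r : EReal) := by
    intro u
    have h1 := hJ γ hγ u x₀
    refine ⟨(f (J γ u)).toReal, (EReal.coe_toReal ?_ (hbot _)).symm⟩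
    intro htop
    obtain ⟨r₀, hr₀⟩ : ∃ r : ℝ, f x₀ = (r : EReal) :=
      ⟨(f x₀).toReal, (EReal.coe_toReal hx₀ (hbot x₀)).symm⟩
    rw [htop, hr₀, ← EReal.coe_add, EReal.top_add_coe] at h1
    exact EReal.coe_ne_top _ (top_le_iff.mp h1)
  -- Step 2: strong minimality inequality along the geodesic between the two resolvents
  have core : ∀ (u v : X) (av bv : ℝ), f (J γ u) = (av : EReal) → f (J γ v) = (bv : EReal) →
      ∀ t : ℝ, 0 < t → t ≤ 1 →
      av + 1/(2*γ) * dist u (J γ u)^2 + 1/(2*γ) * (1-t) * dist (J γ u) (J γ v)^2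
        ≤ bv + 1/(2*γ) * dist u (J γ v)^2 := by
    intro u v av bv hA hB t ht0 ht1
    have htI : t ∈ Set.Icc (0:ℝ) 1 := ⟨ht0.le, ht1⟩
    have h1 := hJ γ hγ u (w (J γ u) (J γ v) t)
    have h2 := hconv (J γ u) (J γ v) t htI
    have h3 := hcat (J γ u) (J γ v) u t htI
    rw [hA, hB, ← EReal.coe_mul, ← EReal.coe_mul, ← EReal.coe_add] at h2
    have h4 : f (w (J γ u) (J γ v) t) + ((1/(2*γ) * dist u (w (J γ u) (J γ v) t) ^ 2 : ℝ) : EReal)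
        ≤ (((1-t)*av + t*bv + 1/(2*γ) * ((1-t) * dist u (J γ u)^2 + t * dist u (J γ v)^2
            - t*(1-t) * dist (J γ u) (J γ v)^2) : ℝ) : EReal) := by
      refine le_trans (add_le_add h2 le_rfl) ?_
      rw [← EReal.coe_add, EReal.coe_le_coe_iff]
      have hm := mul_le_mul_of_nonneg_left h3 hc.le
      linarith
    rw [hA, ← EReal.coe_add] at h1
    have h6 := EReal.coe_le_coe_iff.mp (le_trans h1 h4)
    have h7 : t * (av + 1/(2*γ) * dist u (J γ u)^2 + 1/(2*γ) * (1-t) * dist (J γ u) (J γ v)^2)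
        ≤ t * (bv + 1/(2*γ) * dist u (J γ v)^2) := by nlinarith [h6]
    exact le_of_mul_le_mul_left h7 ht0
  obtain ⟨av, ha⟩ := hfin x
  obtain ⟨bv, hb⟩ := hfin y
  by_contra hcon
  push_neg at hcon
  have hd0 : (0:ℝ) ≤ dist x y := dist_nonneg
  have hD0 : (0:ℝ) < dist (J γ x) (J γ y) := lt_of_le_of_lt hd0 hcon
  -- Step 3: the quadrilateral inequality (Sato's argument)
  have w1 := hcat x (J γ y) y (1/2) (by norm_num)
  have w2 := hcat x (J γ y) (J γ x) (1/2) (by norm_num)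
  have tri := dist_triangle y (w x (J γ y) (1/2)) (J γ x)
  rw [dist_comm y x] at w1
  rw [dist_comm (J γ x) x] at w2
  have hW : dist x (J γ y)^2 + dist y (J γ x)^2
      ≤ dist x (J γ x)^2 + dist y (J γ y)^2 + dist (J γ x) (J γ y)^2 + dist x y^2 := by
    have hcomm : dist (w x (J γ y) (1/2)) (J γ x) = dist (J γ x) (w x (J γ y) (1/2)) :=
      dist_comm _ _
    rw [hcomm] at tri
    nlinarith [w1, w2, tri,
      sq_nonneg (dist y (w x (J γ y) (1/2)) - dist (J γ x) (w x (J γ y) (1/2))),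
      dist_nonneg (x := y) (y := J γ x),
      dist_nonneg (x := y) (y := w x (J γ y) (1/2)),
      dist_nonneg (x := J γ x) (y := w x (J γ y) (1/2))]
  -- Step 4: combine
  have htt : ∀ t : ℝ, 0 < t → t ≤ 1 →
      2*(1-t) * dist (J γ x) (J γ y)^2 ≤ dist (J γ x) (J γ y)^2 + dist x y^2 := by
    intro t ht0 ht1
    have k1 := core x y av bv ha hb t ht0 ht1
    have k2 := core y x bv av hb ha t ht0 ht1
    rw [dist_comm (J γ y) (J γ x)] at k2
    nlinarith [k1, k2, hc, mul_le_mul_of_nonneg_left hW hc.le]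
  have hdiff : 0 < dist (J γ x) (J γ y)^2 - dist x y^2 := by
    have hsum : 0 < dist (J γ x) (J γ y) + dist x y := by linarith
    nlinarith [mul_pos (sub_pos.mpr hcon) hsum]
  have hD2 : (0:ℝ) < dist (J γ x) (J γ y)^2 := by positivity
  set D2 := dist (J γ x) (J γ y)^2 with hD2def
  set d2 := dist x y^2 with hd2def
  have ht0a : 0 < (D2 - d2)/(4*D2) := div_pos hdiff (by positivity)
  have ht0b : (D2 - d2)/(4*D2) ≤ 1 := by
    rw [div_le_one (by positivity)]
    have : (0:ℝ) ≤ d2 := by rw [hd2def]; positivity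
    linarith
  have hfin2 := htt ((D2-d2)/(4*D2)) ht0a ht0b
  have hDne : D2 ≠ 0 := ne_of_gt hD2
  have hmul : (D2-d2)/(4*D2) * D2 = (D2-d2)/4 := by field_simp
  nlinarith [hfin2, hmul, hdiff]
end

section
/- Let X be a complete CAT(0) space and f : X → (-∞,∞] an lsc proper function with a minimizer, which is uniformly convex with modulus φ. Let x ∈ X and b > 0 with d(x,p) ≤ b for some minimizer p, and let (γ_n) be positive reals with Σγ_n = ∞ having rate of divergence θ. Let (x_n) be the proximal point algorithm starting at x. Define β(k) = θ^M(⌈b²(k+1)/2⌉) + 1 and Σ(k) = β(⌈8/φ(1/(k+1))⌉). Then for all k and all n ≥ Σ(k), d(x_n, z) ≤ 1/(k+1), where z = lim x_n; i.e., Σ is a rate of convergence for (x_n). -/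
/-- θ^M(n) = max_{i ≤ n} θ(i) -/
def maxUpTo (θ : ℕ → ℕ) (n : ℕ) : ℕ := (Finset.range (n+1)).sup θ

/-- β(k) = θ^M(⌈b²(k+1)/2⌉) + 1, the rate of convergence of f(xₙ) → min f -/
noncomputable def betaRate (θ : ℕ → ℕ) (b : ℝ) (k : ℕ) : ℕ :=
  maxUpTo θ ⌈b^2 * ((k:ℝ)+1) / 2⌉₊ + 1

/-- Σ(k) = β(⌈8/φ(1/(k+1))⌉) -/
noncomputable def sigmaRate (θ : ℕ → ℕ) (b : ℝ) (φ : ℝ → EReal) (k : ℕ) : ℕ :=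
  betaRate θ b ⌈(8:ℝ) / (φ (1 / ((k:ℝ)+1))).toReal⌉₊

private lemma ereal_sub_le_of_nonneg (a c : EReal) (h : 0 ≤ c) : a - c ≤ a := by
  have h1 : -c ≤ 0 := by rw [show (0:EReal) = -0 by simp]; exact EReal.neg_le_neg_iff.mpr h
  calc a - c = a + (-c) := rfl
    _ ≤ a + 0 := add_le_add_right h1 _
    _ = a := by simp

private lemma ereal_ne_top (a : EReal) (c d : ℝ) (h : a + (c:EReal) ≤ (d:EReal)) : a ≠ ⊤ := by
  intro ha; rw [ha, EReal.top_add_coe] at h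
  exact (EReal.coe_lt_top d).not_ge h

private lemma ereal_toReal_pos (x : EReal) (h1 : x ≠ ⊤) (h2 : 0 < x) : 0 < x.toReal := by
  have hb : x ≠ ⊥ := ne_of_gt (lt_of_lt_of_le (by simp : (⊥:EReal) < 0) h2.le)
  have := (EReal.coe_toReal h1 hb)
  rw [← this] at h2; exact_mod_cast h2

/-- quantitative strong convergence of the proximal point algorithm
for uniformly convex f: Σ is a rate of convergence of (xₙ) to its limit z. -/
theorem stmt8
    {X : Type*} [MetricSpace X] [CompleteSpace X]
    -- geodesic convex-combination structure: `w x y t` is the point `(1-t)x + ty`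
    (w : X → X → ℝ → X)
    (hw1 : ∀ x y : X, ∀ t ∈ Set.Icc (0:ℝ) 1, dist x (w x y t) = t * dist x y)
    (hw2 : ∀ x y : X, ∀ t ∈ Set.Icc (0:ℝ) 1, dist y (w x y t) = (1-t) * dist x y)
    (hcat : ∀ x y z : X, ∀ t ∈ Set.Icc (0:ℝ) 1,
      dist z (w x y t)^2 ≤ (1-t) * dist z x^2 + t * dist z y^2 - t*(1-t) * dist x y^2)
    (f : X → EReal)
    -- φ is a modulus of uniform convexity of f: nondecreasing on [0,∞),
    -- nonnegative, vanishing only at 0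
    (φ : ℝ → EReal)
    (hφmono : ∀ s t : ℝ, 0 ≤ s → s ≤ t → φ s ≤ φ t)
    (hφnonneg : ∀ s : ℝ, 0 ≤ s → 0 ≤ φ s)
    (hφzero : ∀ s : ℝ, 0 ≤ s → (φ s = 0 ↔ s = 0))
    -- f is uniformly convex with modulus φ
    (huc : ∀ x y : X, ∀ t ∈ Set.Icc (0:ℝ) 1,
      f (w x y t) ≤ ((1 - t : ℝ) : EReal) * f x + ((t : ℝ) : EReal) * f y
        - ((t * (1 - t) : ℝ) : EReal) * φ (dist x y))
    (hlsc : LowerSemicontinuous f)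
    (hproper : ∃ x, f x ≠ ⊤) (hbot : ∀ x, f x ≠ ⊥)
    -- the resolvent
    (J : ℝ → X → X)
    (hJ : ∀ γ : ℝ, 0 < γ → ∀ x y : X,
      f (J γ x) + ((1/(2*γ) * dist x (J γ x)^2 : ℝ) : EReal) ≤
        f y + ((1/(2*γ) * dist x y^2 : ℝ) : EReal))
    -- a minimizer p with d(x₀,p) ≤ b
    (p : X) (hp : ∀ y, f p ≤ f y)
    (x0 : X) (b : ℝ) (hb : 0 < b) (hxb : dist x0 p ≤ b)
    -- step sizes with rate of divergence θ
    (γseq : ℕ → ℝ) (hγseq : ∀ n, 0 < γseq n)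
    (θ : ℕ → ℕ) (hθ : ∀ P : ℕ, (P:ℝ) ≤ ∑ i ∈ Finset.range (θ P + 1), γseq i)
    -- the proximal point algorithm starting at x₀
    (x : ℕ → X) (hx0 : x 0 = x0) (hxs : ∀ n, x (n+1) = J (γseq n) (x n)) :
    ∃ z : X, Filter.Tendsto x Filter.atTop (nhds z) ∧
      ∀ k : ℕ, ∀ n : ℕ, sigmaRate θ b φ k ≤ n → dist (x n) z ≤ 1 / ((k:ℝ)+1) := by
  -- minimizer value is finite
  obtain ⟨y₀, hy₀⟩ := hproper
  have hpt : f p ≠ ⊤ := fun h => hy₀ (top_le_iff.mp (h ▸ hp y₀))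
  set m : ℝ := (f p).toReal with hm
  have hpfin : f p = (m : EReal) := (EReal.coe_toReal hpt (hbot p)).symm
  -- values along the iteration are finite
  set r : ℕ → ℝ := fun n => (f (x n)).toReal with hrdef
  have hfin : ∀ n : ℕ, f (x (n+1)) = ((r (n+1) : ℝ) : EReal) := by
    intro n
    have h1 := hJ (γseq n) (hγseq n) (x n) p
    rw [← hxs n, hpfin] at h1
    have h1' : f (x (n+1)) + ((1/(2*γseq n) * dist (x n) (x (n+1))^2 : ℝ) : EReal)
        ≤ ((m + 1/(2*γseq n) * dist (x n) p^2 : ℝ) : EReal) := by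
      refine h1.trans (le_of_eq ?_); norm_cast
    have htop : f (x (n+1)) ≠ ⊤ := ereal_ne_top _ _ _ h1'
    exact (EReal.coe_toReal htop (hbot _)).symm
  -- key resolvent inequality
  have hkey : ∀ n : ℕ, r (n+1) ≤ m + 1/(2*γseq n) * dist (x n) p^2
      - 1/(2*γseq n) * dist (x (n+1)) p^2 := by
    intro n
    set γ := γseq n with hγdef
    have hγ : 0 < γ := hγseq n
    set u := x n
    set v := x (n+1) with hvdef
    set A := 1/(2*γ) * dist u v^2 with hA
    set B := 1/(2*γ) * dist u p^2 with hB
    set C := 1/(2*γ) * dist v p^2 with hC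
    have hAnn : 0 ≤ A := by positivity
    have hCnn : 0 ≤ C := by positivity
    have hquot : ∀ t ∈ Set.Ioc (0:ℝ) 1, r (n+1) + A ≤ m + B - (1-t)*C := by
      intro t ht
      have ht' : t ∈ Set.Icc (0:ℝ) 1 := ⟨ht.1.le, ht.2⟩
      -- resolvent optimality against the point w v p t
      have h1 := hJ γ hγ u (w v p t)
      rw [← hxs n] at h1
      -- convexity bound, dropping the nonnegative modulus term
      have h3 : f (w v p t) ≤ (((1-t) * r (n+1) + t * m : ℝ) : EReal) := by
        refine (huc v p t ht').trans ?_
        have hφnn : (0:EReal) ≤ ((t * (1 - t) : ℝ) : EReal) * φ (dist v p) := by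
          apply mul_nonneg
          · exact_mod_cast mul_nonneg ht.1.le (by linarith [ht.2] : (0:ℝ) ≤ 1 - t)
          · exact hφnonneg _ dist_nonneg
        refine (ereal_sub_le_of_nonneg _ _ hφnn).trans (le_of_eq ?_)
        rw [hfin n, hpfin]; norm_cast
      have h4 : f (w v p t) + ((1/(2*γ) * dist u (w v p t)^2 : ℝ) : EReal)
          ≤ (((1-t) * r (n+1) + t * m + 1/(2*γ) * dist u (w v p t)^2 : ℝ) : EReal) := by
        refine (add_le_add_left h3 _).trans (le_of_eq ?_); norm_cast
      have h5 := h1.trans h4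
      rw [hfin n] at h5
      have h6 : r (n+1) + 1/(2*γ) * dist u v^2
          ≤ (1-t) * r (n+1) + t * m + 1/(2*γ) * dist u (w v p t)^2 := by
        exact_mod_cast h5
      have h7 : dist u (w v p t)^2
          ≤ (1-t) * dist u v^2 + t * dist u p^2 - t*(1-t) * dist v p^2 :=
        hcat v p u t ht'
      have h8 : 1/(2*γ) * dist u (w v p t)^2
          ≤ 1/(2*γ) * ((1-t) * dist u v^2 + t * dist u p^2 - t*(1-t) * dist v p^2) :=
        mul_le_mul_of_nonneg_left h7 (by positivity)
      -- so t*(r+A) ≤ t*(m+B-(1-t)C); divide by t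
      have h9 : t * (r (n+1) + A) ≤ t * (m + B - (1-t)*C) := by
        rw [hA, hB, hC]; nlinarith [h6, h8]
      exact le_of_mul_le_mul_left h9 ht.1
    -- take t → 0
    have hlim : r (n+1) + A ≤ m + B - C := by
      refine le_of_forall_pos_le_add ?_
      intro ε hε
      rcases eq_or_lt_of_le hCnn with hC0 | hC0
      · have := hquot 1 ⟨one_pos, le_refl 1⟩
        rw [← hC0] at this ⊢; linarith
      · set t := min 1 (ε/C) with htdef
        have ht : t ∈ Set.Ioc (0:ℝ) 1 :=
          ⟨lt_min one_pos (div_pos hε hC0), min_le_left _ _⟩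
        have htC : t * C ≤ ε := by
          have h1 : t ≤ ε/C := min_le_right _ _
          calc t * C ≤ (ε/C) * C := mul_le_mul_of_nonneg_right h1 hCnn
            _ = ε := by field_simp
        have := hquot t ht
        linarith
    linarith
  -- lower bound by the minimum
  have hmlb : ∀ n : ℕ, m ≤ r (n+1) := by
    intro n
    have := hp (x (n+1))
    rw [hpfin, hfin n] at this
    exact_mod_cast this
  -- Fejér monotonicity
  have hFej : ∀ n : ℕ, 2 * γseq n * (r (n+1) - m) ≤ dist (x n) p^2 - dist (x (n+1)) p^2 := by
    intro n
    have hγ : 0 < γseq n := hγseq n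
    have hk := hkey n
    have hcancel : 2 * γseq n * (1/(2*γseq n)) = 1 := by field_simp
    nlinarith [mul_le_mul_of_nonneg_left hk (by positivity : (0:ℝ) ≤ 2 * γseq n)]
  have hDmono : ∀ n : ℕ, dist (x (n+1)) p^2 ≤ dist (x n) p^2 := by
    intro n
    have h1 := hFej n
    have h2 := hmlb n
    have hγ : 0 < γseq n := hγseq n
    nlinarith
  -- telescoping
  have hTel : ∀ n : ℕ, ∑ i ∈ Finset.range n, 2 * γseq i * (r (i+1) - m)
      ≤ dist (x 0) p^2 - dist (x n) p^2 := by
    intro n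
    induction n with
    | zero => simp
    | succ n ih =>
      rw [Finset.sum_range_succ]
      have := hFej n
      linarith
  -- monotone decrease of values
  have hdec : ∀ n : ℕ, r (n+2) ≤ r (n+1) := by
    intro n
    have h1 := hJ (γseq (n+1)) (hγseq (n+1)) (x (n+1)) (x (n+1))
    rw [← hxs (n+1), hfin n, hfin (n+1)] at h1
    have h1' : r (n+2) + 1/(2*γseq (n+1)) * dist (x (n+1)) (x (n+2))^2
        ≤ r (n+1) + 1/(2*γseq (n+1)) * dist (x (n+1)) (x (n+1))^2 := by
      exact_mod_cast h1
    rw [dist_self] at h1'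
    have hγ2 : 0 < γseq (n+1) := hγseq (n+1)
    have : 0 ≤ 1/(2*γseq (n+1)) * dist (x (n+1)) (x (n+2))^2 := by positivity
    nlinarith
  have hranti : ∀ i j : ℕ, i ≤ j → r (j+1) ≤ r (i+1) := by
    intro i j hij
    induction j, hij using Nat.le_induction with
    | base => exact le_refl _
    | succ j hij ih => exact (hdec j).trans ih
  -- summed bound
  have hsum : ∀ nn : ℕ, 2 * (∑ i ∈ Finset.range (nn+1), γseq i) * (r (nn+1) - m) ≤ b^2 := by
    intro nn
    have h1 : ∑ i ∈ Finset.range (nn+1), 2 * γseq i * (r (nn+1) - m)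
        ≤ ∑ i ∈ Finset.range (nn+1), 2 * γseq i * (r (i+1) - m) := by
      apply Finset.sum_le_sum
      intro i hi
      have hi' : i ≤ nn := Nat.lt_succ_iff.mp (Finset.mem_range.mp hi)
      have := hranti i nn hi'
      have hγ := (hγseq i).le
      nlinarith
    have h2 := hTel (nn+1)
    have h3 : ∑ i ∈ Finset.range (nn+1), 2 * γseq i * (r (nn+1) - m)
        = 2 * (∑ i ∈ Finset.range (nn+1), γseq i) * (r (nn+1) - m) := by
      rw [Finset.mul_sum, Finset.sum_mul]
    have h4 : dist (x 0) p^2 ≤ b^2 := by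
      rw [hx0]
      have : 0 ≤ dist x0 p := dist_nonneg
      nlinarith
    have h5 : 0 ≤ dist (x (nn+1)) p^2 := by positivity
    rw [← h3]
    linarith
  -- β is a rate of convergence for the function values
  have hβrate : ∀ k n : ℕ, betaRate θ b k ≤ n → r n ≤ m + 1/((k:ℝ)+1) := by
    intro k n hn
    have hn1 : 1 ≤ n := le_trans (by simp [betaRate]) hn
    obtain ⟨nn, rfl⟩ : ∃ nn, n = nn + 1 := ⟨n - 1, by omega⟩
    set P := ⌈b^2 * ((k:ℝ)+1) / 2⌉₊ with hP
    have hθP : θ P ≤ maxUpTo θ P := Finset.le_sup (Finset.self_mem_range_succ P)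
    have hsub : Finset.range (θ P + 1) ⊆ Finset.range (nn+1) := by
      apply Finset.range_subset_range.mpr
      have : betaRate θ b k = maxUpTo θ P + 1 := rfl
      omega
    set S := ∑ i ∈ Finset.range (nn+1), γseq i with hS
    have hS1 : (P:ℝ) ≤ S :=
      (hθ P).trans (Finset.sum_le_sum_of_subset_of_nonneg hsub (fun i _ _ => (hγseq i).le))
    have hS2 : b^2 * ((k:ℝ)+1) / 2 ≤ (P:ℝ) := Nat.le_ceil _
    have hk1 : (0:ℝ) < (k:ℝ)+1 := by positivity
    have hb2 : (0:ℝ) < b^2 := by positivity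
    have h1 := hsum nn
    have hrm : 0 ≤ r (nn+1) - m := by linarith [hmlb nn]
    have h2 : b^2 * ((k:ℝ)+1) ≤ 2*S := by linarith
    have h3 : (r (nn+1) - m) * ((k:ℝ)+1) ≤ 1 := by
      nlinarith [mul_le_mul_of_nonneg_left h2 hrm]
    have h4 : r (nn+1) - m ≤ 1/((k:ℝ)+1) := by
      rw [le_div_iff₀ hk1]; exact h3
    linarith
  -- uniform convexity at the minimizer gives the modulus bound
  have hφbound : ∀ n : ℕ, φ (dist (x (n+1)) p) ≤ ((2*(r (n+1) - m) : ℝ) : EReal) := by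
    intro n
    have hhalf : (1/2 : ℝ) ∈ Set.Icc (0:ℝ) 1 := by constructor <;> norm_num
    have h2 := huc p (x (n+1)) (1/2) hhalf
    have h1 := (hp (w p (x (n+1)) (1/2))).trans h2
    rw [hpfin, hfin n] at h1
    set ψ := φ (dist p (x (n+1))) with hψ
    have hψnn : 0 ≤ ψ := hφnonneg _ dist_nonneg
    have hcoef : ((1/2 * (1 - 1/2) : ℝ) : EReal) = ((1/4 : ℝ) : EReal) := by norm_num
    have hψtop : ψ ≠ ⊤ := by
      intro htop
      rw [htop, hcoef, EReal.coe_mul_top_of_pos (by norm_num : (0:ℝ) < 1/4)] at h1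
      have : ((1 - 1/2 : ℝ) : EReal) * (m:EReal) + ((1/2 : ℝ) : EReal) * ((r (n+1) : ℝ) : EReal)
          = (((1-1/2) * m + 1/2 * r (n+1) : ℝ) : EReal) := by norm_cast
      rw [this] at h1
      simp only [EReal.sub_top] at h1
      exact (by simp : ¬ ((m:EReal) ≤ ⊥)) h1
    have hψeq : ψ = ((ψ.toReal : ℝ) : EReal) := (EReal.coe_toReal hψtop (by
      intro hbot'
      rw [hbot'] at hψnn
      exact (by simp : ¬ ((0:EReal) ≤ ⊥)) hψnn)).symm
    rw [hψeq] at h1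
    have h1' : (m:ℝ) ≤ (1-1/2) * m + 1/2 * r (n+1) - 1/2*(1-1/2) * ψ.toReal := by
      exact_mod_cast h1
    have hgoal : ψ.toReal ≤ 2*(r (n+1) - m) := by linarith
    rw [dist_comm (x (n+1)) p, ← hψ, hψeq]
    exact_mod_cast hgoal
  -- the Σ rate for distances
  have hfinal : ∀ k n : ℕ, sigmaRate θ b φ k ≤ n → dist (x n) p ≤ 1/((k:ℝ)+1) := by
    intro k n hn
    set φ0 := (φ (1/((k:ℝ)+1))).toReal with hφ0
    set K := ⌈(8:ℝ)/φ0⌉₊ with hK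
    have hrn : r n ≤ m + 1/((K:ℝ)+1) := hβrate K n hn
    have hn1 : 1 ≤ n := le_trans (by simp [sigmaRate, betaRate]) hn
    obtain ⟨nn, rfl⟩ : ∃ nn, n = nn + 1 := ⟨n - 1, by omega⟩
    have hφb := hφbound nn
    have hφb2 : φ (dist (x (nn+1)) p) ≤ ((2/((K:ℝ)+1) : ℝ) : EReal) := by
      refine hφb.trans ?_
      have : 2*(r (nn+1) - m) ≤ 2/((K:ℝ)+1) := by
        have hK1 : (0:ℝ) < (K:ℝ)+1 := by positivity
        rw [div_eq_mul_inv, mul_comm (2:ℝ)]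
        have : r (nn+1) - m ≤ ((K:ℝ)+1)⁻¹ := by
          rw [← one_div]; linarith
        linarith
      exact_mod_cast this
    by_contra hcon
    push_neg at hcon
    have hknn : (0:ℝ) ≤ 1/((k:ℝ)+1) := by positivity
    have hmono2 : φ (1/((k:ℝ)+1)) ≤ φ (dist (x (nn+1)) p) := hφmono _ _ hknn hcon.le
    have hle : φ (1/((k:ℝ)+1)) ≤ ((2/((K:ℝ)+1) : ℝ) : EReal) := hmono2.trans hφb2
    have hnetop : φ (1/((k:ℝ)+1)) ≠ ⊤ := by
      intro h
      rw [h] at hle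
      exact (EReal.coe_lt_top _).not_ge hle
    have hne0 : φ (1/((k:ℝ)+1)) ≠ 0 := by
      intro h
      have := (hφzero _ hknn).mp h
      have hk1 : (0:ℝ) < 1/((k:ℝ)+1) := by positivity
      linarith
    have hpos : 0 < φ (1/((k:ℝ)+1)) := lt_of_le_of_ne (hφnonneg _ hknn) (Ne.symm hne0)
    have hφ0pos : 0 < φ0 := ereal_toReal_pos _ hnetop hpos
    have hle' : φ0 ≤ 2/((K:ℝ)+1) := by
      have heq : φ (1/((k:ℝ)+1)) = ((φ0 : ℝ) : EReal) := (EReal.coe_toReal hnetop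
        (ne_of_gt (lt_of_lt_of_le (by simp : (⊥:EReal) < 0) hpos.le))).symm
      rw [heq] at hle
      exact_mod_cast hle
    have hKge : (8:ℝ)/φ0 ≤ (K:ℝ) := Nat.le_ceil _
    have h8pos : (0:ℝ) < 8/φ0 := div_pos (by norm_num) hφ0pos
    have hcontr : 2/((K:ℝ)+1) < φ0 := by
      calc 2/((K:ℝ)+1) < 2/((8:ℝ)/φ0) := by
            apply div_lt_div_of_pos_left (by norm_num) h8pos
            linarith
        _ = φ0/4 := by field_simp; ring
        _ < φ0 := by linarith
    linarith
  -- conclusion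
  refine ⟨p, ?_, fun k n hn => hfinal k n hn⟩
  rw [Metric.tendsto_atTop]
  intro ε hε
  obtain ⟨k, hk⟩ := exists_nat_one_div_lt hε
  exact ⟨sigmaRate θ b φ k, fun n hn => lt_of_le_of_lt (hfinal k n hn) hk⟩
end

section
/- A metric space X is totally bounded if and only if it has a modulus of total boundedness, i.e., a function α : ℕ → ℕ such that for every k ∈ ℕ and every sequence (x_n) in X there exist i < j ≤ α(k) with d(x_i, x_j) ≤ 1/(k+1). -/
/-- A metric space is totally bounded iff it has a modulus of
total boundedness α : ℕ → ℕ, i.e. for every k and every sequence (xₙ) there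
exist i < j ≤ α(k) with d(x_i, x_j) ≤ 1/(k+1). -/
theorem stmt11 {X : Type*} [MetricSpace X] :
    TotallyBounded (Set.univ : Set X) ↔
      ∃ α : ℕ → ℕ, ∀ k : ℕ, ∀ x : ℕ → X,
        ∃ i j : ℕ, i < j ∧ j ≤ α k ∧ dist (x i) (x j) ≤ 1 / ((k:ℝ)+1) := by
  classical
  constructor
  · intro h
    have key : ∀ k : ℕ, ∃ N : ℕ, ∀ x : ℕ → X,
        ∃ i j : ℕ, i < j ∧ j ≤ N ∧ dist (x i) (x j) ≤ 1 / ((k:ℝ)+1) := by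
      intro k
      have hδ : (0:ℝ) < 1/(2*((k:ℝ)+1)) := by positivity
      obtain ⟨t, htf, hcov⟩ := Metric.totallyBounded_iff.mp h _ hδ
      refine ⟨htf.toFinset.card, ?_⟩
      intro x
      have hc : ∀ n : ℕ, ∃ z ∈ htf.toFinset, x n ∈ Metric.ball z (1/(2*((k:ℝ)+1))) := by
        intro n
        have := hcov (Set.mem_univ (x n))
        simp only [Set.mem_iUnion, exists_prop] at this
        obtain ⟨z, hz, hzm⟩ := this
        exact ⟨z, htf.mem_toFinset.mpr hz, hzm⟩
      choose c hc1 hc2 using hc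
      have hmap : ∀ n ∈ Finset.range (htf.toFinset.card + 1), c n ∈ htf.toFinset :=
        fun n _ => hc1 n
      have hcard : htf.toFinset.card < (Finset.range (htf.toFinset.card+1)).card := by simp
      obtain ⟨i, hi, j, hj, hne, heq⟩ :=
        Finset.exists_ne_map_eq_of_card_lt_of_maps_to hcard hmap
      have hd : ∀ a b : ℕ, c a = c b → dist (x a) (x b) ≤ 1 / ((k:ℝ)+1) := by
        intro a b hab
        have h1 := hc2 a
        have h2 := hc2 b
        rw [Metric.mem_ball] at h1 h2
        have htri : dist (x a) (x b) ≤ dist (x a) (c a) + dist (x b) (c b) := by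
          rw [hab]; exact dist_triangle_right _ _ _
        have heq2 : 1/(2*((k:ℝ)+1)) + 1/(2*((k:ℝ)+1)) = 1 / ((k:ℝ)+1) := by
          rw [← add_div]; rw [div_eq_div_iff (by positivity) (by positivity)]; ring
        linarith
      rcases lt_or_gt_of_ne hne with hlt | hgt
      · exact ⟨i, j, hlt, Nat.lt_succ_iff.mp (Finset.mem_range.mp hj), hd i j heq⟩
      · exact ⟨j, i, hgt, Nat.lt_succ_iff.mp (Finset.mem_range.mp hi), hd j i heq.symm⟩
    choose α hα using key
    exact ⟨α, hα⟩
  · rintro ⟨α, hα⟩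
    by_contra hnb
    rw [Metric.totallyBounded_iff] at hnb
    push_neg at hnb
    obtain ⟨ε, hε, hbad⟩ := hnb
    have H : ∀ s : Finset X, ∃ y : X, ∀ z ∈ s, ε ≤ dist y z := by
      intro s
      have := hbad (s : Set X) s.finite_toSet
      rw [Set.not_subset] at this
      obtain ⟨y, -, hy⟩ := this
      refine ⟨y, fun z hz => ?_⟩
      by_contra hlt
      push_neg at hlt
      exact hy (Set.mem_iUnion₂.mpr ⟨z, hz, Metric.mem_ball.mpr hlt⟩)
    choose f hf using H
    let F : ℕ → X × Finset X := fun n => Nat.rec (f ∅, {f ∅})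
      (fun _ p => (f p.2, insert (f p.2) p.2)) n
    set x : ℕ → X := fun n => (F n).1 with hx
    have hmono : ∀ m n : ℕ, m ≤ n → x m ∈ (F n).2 := by
      intro m n hmn
      induction n with
      | zero =>
        have : m = 0 := Nat.le_zero.mp hmn
        subst this; simp [x, F]
      | succ n ih =>
        rcases Nat.le_succ_iff_eq_or_le.mp hmn with h' | h'
        · subst h'; exact Finset.mem_insert_self _ _
        · exact Finset.mem_insert_of_mem (ih h')
    obtain ⟨k, hk⟩ := exists_nat_one_div_lt hε
    obtain ⟨i, j, hij, -, hd⟩ := hα k x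
    obtain ⟨n, rfl⟩ : ∃ n, j = n + 1 := ⟨j - 1, (Nat.succ_pred_eq_of_pos (Nat.pos_of_ne_zero (by omega))).symm⟩
    have hxi : x i ∈ (F n).2 := hmono i n (Nat.lt_succ_iff.mp hij)
    have hxj : x (n+1) = f (F n).2 := rfl
    have hge : ε ≤ dist (x (n+1)) (x i) := by
      rw [hxj]; exact hf (F n).2 (x i) hxi
    rw [dist_comm] at hge
    have := hd.trans_lt hk
    exact absurd hge (not_le.mpr (by linarith))
end

section
/- Let X be a complete CAT(0) space, f : X → (-∞,∞] convex, lsc, proper with Argmin(f) ≠ ∅, and (x_n) the proximal point algorithm with step sizes γ_i. Suppose L : ℕ → ℕ is nondecreasing with L(k) ≥ max_{0≤i≤k} γ_i. Then (x_n) is uniformly Fejér monotone with respect to Argmin(f) with modulus χ_L(n,m,r) = 2L(n+m−1)(m(r+1)+1)² − 1: for all n, m, r ∈ ℕ, if q satisfies f(q) ≤ f(y) + 1/(χ_L(n,m,r)+1) for all y ∈ X, then d(x_{n+l}, q) < d(x_n, q) + 1/(r+1) for all l ≤ m. -/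
lemma aux_limit (A B : ℝ) (h : ∀ t : ℝ, 0 < t → t < 1 → A ≤ t * B) : A ≤ 0 := by
  by_contra hA
  push_neg at hA
  rcases le_or_gt B 0 with hB | hB
  · have := h (1/2) one_half_pos one_half_lt_one
    nlinarith
  · have ht1 : (0:ℝ) < min (1/2) (A/(2*B)) := lt_min one_half_pos (by positivity)
    have ht2 : min (1/2) (A/(2*B)) < 1 := lt_of_le_of_lt (min_le_left _ _) (by norm_num)
    have h1 := h _ ht1 ht2
    have h2 : min (1/2) (A/(2*B)) ≤ A/(2*B) := min_le_right _ _
    have h3 : min (1/2) (A/(2*B)) * B ≤ (A/(2*B)) * B :=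
      mul_le_mul_of_nonneg_right h2 hB.le
    have h4 : (A/(2*B)) * B = A/2 := by field_simp
    nlinarith

lemma resolvent_key
    {X : Type*} [MetricSpace X]
    (w : X → X → ℝ → X)
    (hcat : ∀ x y z : X, ∀ t ∈ Set.Icc (0:ℝ) 1,
      dist z (w x y t)^2 ≤ (1-t) * dist z x^2 + t * dist z y^2 - t*(1-t) * dist x y^2)
    (f : X → EReal)
    (hconv : ∀ x y : X, ∀ t ∈ Set.Icc (0:ℝ) 1,
      f (w x y t) ≤ ((1 - t : ℝ) : EReal) * f x + ((t : ℝ) : EReal) * f y)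
    (hbot : ∀ x, f x ≠ ⊥)
    (γ : ℝ) (hγ : 0 < γ) (X0 u q : X)
    (hJx : ∀ y : X, f u + ((1/(2*γ) * dist X0 u^2 : ℝ) : EReal) ≤
        f y + ((1/(2*γ) * dist X0 y^2 : ℝ) : EReal))
    (a b : ℝ) (hfu : f u = (a:EReal)) (hfq : f q = (b:EReal)) :
    a + 1/(2*γ) * (dist X0 u^2 + dist u q^2) ≤ b + 1/(2*γ) * dist X0 q^2 := by
  have hr : 0 < 1/(2*γ) := by positivity
  have key : ∀ t : ℝ, 0 < t → t < 1 →
      (a + 1/(2*γ) * (dist X0 u^2 + dist u q^2) - (b + 1/(2*γ) * dist X0 q^2))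
        ≤ t * (1/(2*γ) * dist u q^2) := by
    intro t ht0 ht1
    have htI : t ∈ Set.Icc (0:ℝ) 1 := ⟨ht0.le, ht1.le⟩
    set wt := w u q t with hwt
    have hconv' := hconv u q t htI
    have hrhs : ((1 - t : ℝ) : EReal) * f u + ((t : ℝ) : EReal) * f q
        = (((1-t)*a + t*b : ℝ) : EReal) := by
      rw [hfu, hfq, ← EReal.coe_mul, ← EReal.coe_mul, ← EReal.coe_add]
    rw [hrhs] at hconv'
    have hwtT : f wt ≠ ⊤ := ne_top_of_le_ne_top (EReal.coe_ne_top _) hconv'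
    obtain ⟨cw, hcw⟩ : ∃ cw : ℝ, f wt = (cw : EReal) :=
      ⟨(f wt).toReal, (EReal.coe_toReal hwtT (hbot wt)).symm⟩
    rw [hcw] at hconv'
    have hcw2 : cw ≤ (1-t)*a + t*b := by exact_mod_cast hconv'
    have hJ' := hJx wt
    rw [hfu, hcw, ← EReal.coe_add, ← EReal.coe_add] at hJ'
    have hJr : a + 1/(2*γ) * dist X0 u^2 ≤ cw + 1/(2*γ) * dist X0 wt^2 := by
      exact_mod_cast hJ'
    have hc := hcat u q X0 t htI
    have hc' : 1/(2*γ) * dist X0 wt^2 ≤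
        1/(2*γ) * ((1-t) * dist X0 u^2 + t * dist X0 q^2 - t*(1-t) * dist u q^2) :=
      mul_le_mul_of_nonneg_left hc hr.le
    have hmain : a + 1/(2*γ) * dist X0 u^2 ≤ (1-t)*a + t*b +
        1/(2*γ) * ((1-t) * dist X0 u^2 + t * dist X0 q^2 - t*(1-t) * dist u q^2) := by
      linarith
    have hT : t * (a + 1/(2*γ) * (dist X0 u^2 + dist u q^2)
        - (b + 1/(2*γ) * dist X0 q^2)) ≤ t * (t * (1/(2*γ) * dist u q^2)) := by
      nlinarith [hmain]
    exact le_of_mul_le_mul_left hT ht0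
  linarith [aux_limit _ _ key]


set_option maxHeartbeats 1600000


/-- χ_L(n,m,r) = 2·L(n+m−1)·(m(r+1)+1)² − 1 -/
def chiL (L : ℕ → ℕ) (n m r : ℕ) : ℕ := 2 * L (n+m-1) * (m*(r+1)+1)^2 - 1

/-- The proximal point algorithm is uniformly Fejér monotone with
respect to Argmin(f) with modulus χ_L: if q is a χ_L(n,m,r)-approximate
minimizer of f then d(x_{n+l}, q) < d(x_n, q) + 1/(r+1) for all l ≤ m. -/
theorem stmt12
    {X : Type*} [MetricSpace X] [CompleteSpace X]
    -- geodesic convex-combination structure: `w x y t` is the point `(1-t)x + ty`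
    (w : X → X → ℝ → X)
    (hw1 : ∀ x y : X, ∀ t ∈ Set.Icc (0:ℝ) 1, dist x (w x y t) = t * dist x y)
    (hw2 : ∀ x y : X, ∀ t ∈ Set.Icc (0:ℝ) 1, dist y (w x y t) = (1-t) * dist x y)
    -- the CAT(0) inequality
    (hcat : ∀ x y z : X, ∀ t ∈ Set.Icc (0:ℝ) 1,
      dist z (w x y t)^2 ≤ (1-t) * dist z x^2 + t * dist z y^2 - t*(1-t) * dist x y^2)
    (f : X → EReal)
    -- f is convex, lower semicontinuous and proper (never -∞, somewhere finite)
    (hconv : ∀ x y : X, ∀ t ∈ Set.Icc (0:ℝ) 1,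
      f (w x y t) ≤ ((1 - t : ℝ) : EReal) * f x + ((t : ℝ) : EReal) * f y)
    (hlsc : LowerSemicontinuous f)
    (hproper : ∃ x, f x ≠ ⊤) (hbot : ∀ x, f x ≠ ⊥)
    -- J is the resolvent: J γ x minimizes y ↦ f(y) + (1/(2γ)) d(x,y)², uniquely
    (J : ℝ → X → X)
    (hJ : ∀ γ : ℝ, 0 < γ → ∀ x y : X,
      f (J γ x) + ((1/(2*γ) * dist x (J γ x)^2 : ℝ) : EReal) ≤
        f y + ((1/(2*γ) * dist x y^2 : ℝ) : EReal))
    (hJuniq : ∀ γ : ℝ, 0 < γ → ∀ x m : X,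
      (∀ y, f m + ((1/(2*γ) * dist x m^2 : ℝ) : EReal) ≤
        f y + ((1/(2*γ) * dist x y^2 : ℝ) : EReal)) → m = J γ x)
    (hmin : ∃ p : X, ∀ y, f p ≤ f y)
    (γseq : ℕ → ℝ) (hγseq : ∀ n, 0 < γseq n)
    (L : ℕ → ℕ) (hLmono : Monotone L)
    (hL : ∀ k : ℕ, ∀ i ≤ k, γseq i ≤ (L k : ℝ))
    (x0 : X) (x : ℕ → X) (hx0 : x 0 = x0)
    (hxs : ∀ n, x (n+1) = J (γseq n) (x n)) :
    ∀ n m r : ℕ, ∀ q : X,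
      (∀ y, f q ≤ f y + ((1 / ((chiL L n m r : ℝ) + 1) : ℝ) : EReal)) →
      ∀ l ≤ m, dist (x (n+l)) q < dist (x n) q + 1 / ((r:ℝ)+1) := by
  intro n m r q hq l hl
  obtain ⟨p, hp⟩ := hmin
  obtain ⟨z0, hz0⟩ := hproper
  have hpT : f p ≠ ⊤ := ne_top_of_le_ne_top hz0 (hp z0)
  -- f q is finite
  have hqT : f q ≠ ⊤ := by
    have h1 := hq p
    have h2 : f p + ((1 / ((chiL L n m r : ℝ) + 1) : ℝ) : EReal) ≠ ⊤ :=
      (EReal.add_lt_top hpT (EReal.coe_ne_top _)).ne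
    exact ne_top_of_le_ne_top h2 h1
  obtain ⟨b, hfq⟩ : ∃ b : ℝ, f q = (b : EReal) :=
    ⟨(f q).toReal, (EReal.coe_toReal hqT (hbot q)).symm⟩
  -- L bound
  have hL1 : 1 ≤ L (n+m-1) := by
    by_contra h
    have h0 : L (n+m-1) = 0 := by omega
    have := hL (n+m-1) 0 (Nat.zero_le _)
    rw [h0] at this
    have := hγseq 0
    simp at *
    linarith
  set cR : ℝ := (m:ℝ) * ((r:ℝ)+1) + 1 with hcR
  have hcRpos : 0 < cR := by positivity
  have hchiN : chiL L n m r + 1 = 2 * L (n+m-1) * (m*(r+1)+1)^2 := by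
    have hP : 1 ≤ (m*(r+1)+1)^2 := Nat.one_le_pow _ _ (by omega)
    have : 1 ≤ 2 * L (n+m-1) * (m*(r+1)+1)^2 := by
      calc 1 ≤ 1 * 1 := by norm_num
      _ ≤ 2 * L (n+m-1) * (m*(r+1)+1)^2 := Nat.mul_le_mul (by omega) hP
    unfold chiL
    omega
  have hchi : (chiL L n m r : ℝ) + 1 = 2 * (L (n+m-1) : ℝ) * cR^2 := by
    have := congrArg (fun k : ℕ => (k : ℝ)) hchiN
    push_cast at this
    rw [hcR]
    push_cast
    linarith
  set ε : ℝ := 1 / ((chiL L n m r : ℝ) + 1) with hε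
  have hεpos : 0 < ε := by
    rw [hε, hchi]
    positivity
  -- per-step estimate
  have step : ∀ i : ℕ, i < n + m →
      dist (x (i+1)) q ^ 2 ≤ dist (x i) q ^ 2 + 1 / cR^2 := by
    intro i him
    have hγ := hγseq i
    have hγL : γseq i ≤ (L (n+m-1) : ℝ) := hL (n+m-1) i (by omega)
    have hxu : x (i+1) = J (γseq i) (x i) := hxs i
    set u := J (γseq i) (x i) with hu
    -- f u is finite
    have huT : f u ≠ ⊤ := by
      have h1 := hJ (γseq i) hγ (x i) p
      have h2 : f p + ((1/(2*γseq i) * dist (x i) p^2 : ℝ) : EReal) ≠ ⊤ :=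
        (EReal.add_lt_top hpT (EReal.coe_ne_top _)).ne
      have h3 := ne_top_of_le_ne_top h2 h1
      intro h
      rw [← hu, h, EReal.top_add_coe] at h3
      exact h3 rfl
    obtain ⟨a, hfu⟩ : ∃ a : ℝ, f u = (a : EReal) :=
      ⟨(f u).toReal, (EReal.coe_toReal huT (hbot u)).symm⟩
    have hkey := resolvent_key w hcat f hconv hbot (γseq i) hγ (x i) u q
      (hJ (γseq i) hγ (x i)) a b hfu hfq
    have hqu : b ≤ a + ε := by
      have := hq u
      rw [hfq, hfu, ← EReal.coe_add] at this
      exact_mod_cast this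
    have hd2 : dist u q ^ 2 ≤ dist (x i) q ^ 2 + 2 * γseq i * ε := by
      have h1 : 1/(2*γseq i) * dist u q ^2 ≤ 1/(2*γseq i) * dist (x i) q ^2 + ε := by
        nlinarith [sq_nonneg (dist (x i) u), mul_pos (by norm_num : (0:ℝ)<1)
          (one_div_pos.mpr (by linarith : (0:ℝ) < 2*γseq i))]
      have h2 : 0 < 2 * γseq i := by linarith
      have h3 := mul_le_mul_of_nonneg_left h1 h2.le
      rw [mul_add] at h3
      field_simp at h3 ⊢
      linarith
    have hγε : 2 * γseq i * ε ≤ 1 / cR^2 := by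
      have hLr : (0:ℝ) < (L (n+m-1) : ℝ) := by exact_mod_cast hL1
      have hεval : ε = 1 / (2 * (L (n+m-1) : ℝ) * cR^2) := by rw [hε, hchi]
      rw [hεval, mul_one_div]
      rw [div_le_div_iff₀ (by positivity) (by positivity)]
      have h5 : 2 * γseq i ≤ 2 * (L (n+m-1):ℝ) := by linarith
      nlinarith [sq_nonneg cR, hcRpos]
    rw [hxu]
    calc dist u q ^ 2 ≤ dist (x i) q ^ 2 + 2 * γseq i * ε := hd2
    _ ≤ dist (x i) q ^ 2 + 1/cR^2 := by linarith
  -- iterate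
  have iter : ∀ k : ℕ, k ≤ m →
      dist (x (n+k)) q ^ 2 ≤ dist (x n) q ^ 2 + (k:ℝ) / cR^2 := by
    intro k
    induction k with
    | zero => intro _; simp
    | succ j ih =>
      intro hj
      have ihj := ih (by omega)
      have hs := step (n+j) (by omega)
      have : n + (j+1) = (n+j) + 1 := by ring
      rw [this]
      push_cast
      have : (j:ℝ)/cR^2 + 1/cR^2 = ((j:ℝ)+1)/cR^2 := by ring
      linarith [hs, ihj]
  have hfin := iter l hl
  have hml : (l:ℝ)/cR^2 ≤ (m:ℝ)/cR^2 := by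
    apply div_le_div_of_nonneg_right ?_ (by positivity)
    exact_mod_cast hl
  have hrpos : (0:ℝ) < 1/((r:ℝ)+1) := by positivity
  have hm2 : (m:ℝ)/cR^2 < 1/((r:ℝ)+1)^2 := by
    rw [div_lt_div_iff₀ (by positivity) (by positivity)]
    have hm : (m:ℝ) ≤ (m:ℝ)^2 := by exact_mod_cast Nat.le_self_pow two_ne_zero m
    have hr0 : (0:ℝ) ≤ (r:ℝ) := Nat.cast_nonneg r
    have hm0 : (0:ℝ) ≤ (m:ℝ) := Nat.cast_nonneg m
    rw [hcR]
    nlinarith [mul_le_mul_of_nonneg_right hm (sq_nonneg ((r:ℝ)+1)),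
      mul_nonneg hm0 (by linarith : (0:ℝ) ≤ (r:ℝ)+1)]
  have hb0 : (0:ℝ) ≤ dist (x n) q := dist_nonneg
  have ha0 : (0:ℝ) ≤ dist (x (n+l)) q := dist_nonneg
  have hs2 : (1/((r:ℝ)+1))^2 = 1/((r:ℝ)+1)^2 := by
    rw [div_pow, one_pow]
  have hsq : dist (x (n+l)) q ^ 2 < (dist (x n) q + 1/((r:ℝ)+1))^2 := by
    nlinarith [mul_nonneg hb0 hrpos.le, hfin, hml, hm2, hs2]
  nlinarith
end

section
/- Let X be a complete CAT(0) space, f : X → (-∞,∞] convex, lsc, proper, with a minimizer p satisfying d(x,p) ≤ b, and (x_n) the proximal point algorithm starting at x with positive step sizes (γ_n) where Σγ_n = ∞ with rate of divergence θ. Then for every k ∈ ℕ and every n ≥ β(k) := θ^M(⌈b²(k+1)/2⌉)+1, the iterate x_n is a k-approximate minimizer of f: f(x_n) ≤ f(y) + 1/(k+1) for all y ∈ X. In particular β is a rate of asymptotic regularity of (x_n) with respect to the approximation Argmin_k(f). -/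
open Finset Filter Topology

lemma nonpos_of_forall_le_mul {s D : ℝ} (h : ∀ t ∈ Set.Ioo (0 : ℝ) 1, s ≤ t * D) : s ≤ 0 := by
  have hlim : Tendsto (fun t : ℝ => t * D) (𝓝[>] 0) (𝓝 0) := by
    simpa using ((continuous_mul_const D).tendsto 0).mono_left nhdsWithin_le_nhds
  exact ge_of_tendsto hlim (eventually_of_mem (Ioo_mem_nhdsGT one_pos) h)

lemma mul_sum_le_of_telescoping {v : ℝ} {u γ D : ℕ → ℝ} {N : ℕ} (hγ : ∀ i, 0 ≤ γ i)
    (hv : ∀ i < N, v ≤ u i) (hstep : ∀ i, u i * γ i ≤ D i - D (i + 1)) :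
    v * ∑ i ∈ range N, γ i ≤ D 0 - D N :=
  calc v * ∑ i ∈ range N, γ i = ∑ i ∈ range N, v * γ i := mul_sum _ _ _
    _ ≤ ∑ i ∈ range N, u i * γ i := sum_le_sum fun i hi =>
        mul_le_mul_of_nonneg_right (hv i (mem_range.mp hi)) (hγ i)
    _ ≤ ∑ i ∈ range N, (D i - D (i + 1)) := sum_le_sum fun i _ => hstep i
    _ = D 0 - D N := sum_range_sub' D N

lemma le_sum_of_betaRate_le {θ : ℕ → ℕ} {b : ℝ} {k n : ℕ} {γ : ℕ → ℝ} (hγ : ∀ i, 0 ≤ γ i)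
    (hθ : ∀ P : ℕ, (P:ℝ) ≤ ∑ i ∈ range (θ P + 1), γ i) (hn : betaRate θ b k ≤ n) :
    b ^ 2 * ((k:ℝ) + 1) / 2 ≤ ∑ i ∈ range n, γ i := by
  set P := ⌈b ^ 2 * ((k:ℝ) + 1) / 2⌉₊
  have hθP : θ P + 1 ≤ n :=
    le_trans (Nat.succ_le_succ (le_sup (self_mem_range_succ P))) hn
  calc b ^ 2 * ((k:ℝ) + 1) / 2 ≤ P := Nat.le_ceil _
    _ ≤ ∑ i ∈ range (θ P + 1), γ i := hθ P
    _ ≤ ∑ i ∈ range n, γ i :=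
        sum_le_sum_of_subset_of_nonneg (range_subset_range.mpr hθP) fun i _ _ => hγ i

lemma le_one_div_of_mul_two_mul_le {g S B : ℝ} {k : ℕ} (hS : 0 < S) (hg : g * (2 * S) ≤ B)
    (hB : B * (k + 1) / 2 ≤ S) : g ≤ 1 / (k + 1) := by
  rw [le_div_iff₀ (by positivity)]
  have : g * (k + 1) * (2 * S) ≤ 1 * (2 * S) := by nlinarith
  exact le_of_mul_le_mul_right this (by positivity)

section Proximal

variable {X : Type*} [MetricSpace X]

def CAT0Inequality (w : X → X → ℝ → X) : Prop :=
  ∀ x y z : X, ∀ t ∈ Set.Icc (0:ℝ) 1,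
    dist z (w x y t) ^ 2 ≤ (1 - t) * dist z x ^ 2 + t * dist z y ^ 2 - t * (1 - t) * dist x y ^ 2

def ConvexAlong (w : X → X → ℝ → X) (f : X → EReal) : Prop :=
  ∀ x y : X, ∀ t ∈ Set.Icc (0:ℝ) 1,
    f (w x y t) ≤ ((1 - t : ℝ) : EReal) * f x + ((t : ℝ) : EReal) * f y

def IsProxPoint (f : X → EReal) (c : ℝ) (x m : X) : Prop :=
  ∀ y, f m + ((c * dist x m ^ 2 : ℝ) : EReal) ≤ f y + ((c * dist x y ^ 2 : ℝ) : EReal)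

variable {w : X → X → ℝ → X} {f : X → EReal} {c : ℝ} {x m : X}

namespace IsProxPoint

lemma le_self (h : IsProxPoint f c x m) (hc : 0 ≤ c) : f m ≤ f x := by
  have hm := h x
  rw [dist_self, zero_pow two_ne_zero, mul_zero, EReal.coe_zero, add_zero] at hm
  exact le_trans (le_add_of_nonneg_right (EReal.coe_nonneg.mpr (by positivity))) hm

lemma ne_top (h : IsProxPoint f c x m) {y : X} (hy : f y ≠ ⊤) : f m ≠ ⊤ := by
  intro hm
  have := h y
  rw [hm, EReal.top_add_coe, top_le_iff] at this
  exact EReal.add_ne_top hy (EReal.coe_ne_top _) this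

lemma toReal_add_le (hcat : CAT0Inequality w) (hconv : ConvexAlong w f) (hbot : ∀ x, f x ≠ ⊥)
    (h : IsProxPoint f c x m) (hc : 0 ≤ c) {y : X} (hy : f y ≠ ⊤) :
    (f m).toReal + c * (dist x m ^ 2 + dist m y ^ 2) ≤ (f y).toReal + c * dist x y ^ 2 := by
  set am := (f m).toReal
  set ay := (f y).toReal
  have hfm : f m = am := (EReal.coe_toReal (h.ne_top hy) (hbot m)).symm
  have hfy : f y = ay := (EReal.coe_toReal hy (hbot y)).symm
  -- compare `m` with the points `w m y t` of the geodesic from `m` to `y`, then let `t → 0`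
  suffices ∀ t ∈ Set.Ioo (0:ℝ) 1,
      am + c * (dist x m ^ 2 + dist m y ^ 2) - (ay + c * dist x y ^ 2) ≤ t * (c * dist m y ^ 2) by
    linarith [nonpos_of_forall_le_mul this]
  intro t ht
  have htI : t ∈ Set.Icc (0:ℝ) 1 := Set.Ioo_subset_Icc_self ht
  have hz : f (w m y t) ≤ (((1 - t) * am + t * ay : ℝ) : EReal) := by
    simpa [hfm, hfy] using hconv m y t htI
  have hmin : am + c * dist x m ^ 2 ≤ (1 - t) * am + t * ay + c * dist x (w m y t) ^ 2 := by
    have := (h (w m y t)).trans (add_le_add_left hz _)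
    rwa [hfm, ← EReal.coe_add, ← EReal.coe_add, EReal.coe_le_coe_iff] at this
  have hgeo := mul_le_mul_of_nonneg_left (hcat m y x t htI) hc
  have key : (am + c * (dist x m ^ 2 + dist m y ^ 2) - (ay + c * dist x y ^ 2)
      - t * (c * dist m y ^ 2)) * t ≤ 0 := by
    linear_combination hmin + hgeo
  exact sub_nonpos.mp (nonpos_of_mul_nonpos_left key ht.1)

lemma toReal_sub_mul_le (hcat : CAT0Inequality w) (hconv : ConvexAlong w f)
    (hbot : ∀ x, f x ≠ ⊥) {γ : ℝ} (hγ : 0 < γ) (h : IsProxPoint f (1 / (2 * γ)) x m) {y : X}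
    (hy : f y ≠ ⊤) :
    ((f m).toReal - (f y).toReal) * (2 * γ) ≤ dist x y ^ 2 - dist m y ^ 2 := by
  have hineq := h.toReal_add_le hcat hconv hbot (by positivity) hy
  calc ((f m).toReal - (f y).toReal) * (2 * γ)
      ≤ 1 / (2 * γ) * (dist x y ^ 2 - dist m y ^ 2) * (2 * γ) := by
        gcongr; nlinarith [sq_nonneg (dist x m), (by positivity : 0 ≤ 1 / (2 * γ))]
    _ = dist x y ^ 2 - dist m y ^ 2 := by field_simp

end IsProxPoint

lemma proximalPoint_toReal_sub_mul_sum_le (hcat : CAT0Inequality w) (hconv : ConvexAlong w f)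
    (hbot : ∀ x, f x ≠ ⊥) {γ : ℕ → ℝ} (hγ : ∀ n, 0 < γ n) {x : ℕ → X}
    (hprox : ∀ n, IsProxPoint f (1 / (2 * γ n)) (x n) (x (n + 1))) {p : X} (hp : f p ≠ ⊤)
    (N : ℕ) :
    ((f (x N)).toReal - (f p).toReal) * (2 * ∑ i ∈ range N, γ i) ≤ dist (x 0) p ^ 2 := by
  have hanti : Antitone (f ∘ x) :=
    antitone_nat_of_succ_le fun n => (hprox n).le_self (by positivity [hγ n])
  have hfin : ∀ n, f (x (n + 1)) ≠ ⊤ := fun n => (hprox n).ne_top hp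
  rw [mul_sum]
  refine (mul_sum_le_of_telescoping (u := fun i => (f (x (i + 1))).toReal - (f p).toReal)
    (D := fun i => dist (x i) p ^ 2) (fun i => by positivity [hγ i]) (fun i hi => ?_)
    (fun i => (hprox i).toReal_sub_mul_le hcat hconv hbot (hγ i) hp)).trans
    (sub_le_self _ (sq_nonneg _))
  exact sub_le_sub_right (EReal.toReal_le_toReal (hanti (Nat.succ_le_of_lt hi)) (hbot _)
    (hfin i)) _

end Proximal

theorem stmt13_general
    {X : Type*} [MetricSpace X]
    -- geodesic convex-combination structure: `w x y t` is the point `(1-t)x + ty`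
    (w : X → X → ℝ → X)
    -- the CAT(0) inequality
    (hcat : ∀ x y z : X, ∀ t ∈ Set.Icc (0:ℝ) 1,
      dist z (w x y t)^2 ≤ (1-t) * dist z x^2 + t * dist z y^2 - t*(1-t) * dist x y^2)
    (f : X → EReal)
    -- f is convex, lower semicontinuous and proper (never -∞, somewhere finite)
    (hconv : ∀ x y : X, ∀ t ∈ Set.Icc (0:ℝ) 1,
      f (w x y t) ≤ ((1 - t : ℝ) : EReal) * f x + ((t : ℝ) : EReal) * f y)
    (hproper : ∃ x, f x ≠ ⊤) (hbot : ∀ x, f x ≠ ⊥)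
    -- J is the resolvent: J γ x minimizes y ↦ f(y) + (1/(2γ)) d(x,y)², uniquely
    (J : ℝ → X → X)
    (hJ : ∀ γ : ℝ, 0 < γ → ∀ x y : X,
      f (J γ x) + ((1/(2*γ) * dist x (J γ x)^2 : ℝ) : EReal) ≤
        f y + ((1/(2*γ) * dist x y^2 : ℝ) : EReal))
    (p : X) (hp : ∀ y, f p ≤ f y)
    (x0 : X) (b : ℝ) (hxb : dist x0 p ≤ b)
    (γseq : ℕ → ℝ) (hγseq : ∀ n, 0 < γseq n)
    (θ : ℕ → ℕ) (hθ : ∀ P : ℕ, (P:ℝ) ≤ ∑ i ∈ Finset.range (θ P + 1), γseq i)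
    (x : ℕ → X) (hx0 : x 0 = x0) (hxs : ∀ n, x (n+1) = J (γseq n) (x n)) :
    ∀ k : ℕ, ∀ n : ℕ, betaRate θ b k ≤ n →
      ∀ y : X, f (x n) ≤ f y + ((1 / ((k:ℝ)+1) : ℝ) : EReal) := by
  intro k n hn y
  have hfp : f p ≠ ⊤ := let ⟨z, hz⟩ := hproper; ne_top_of_le_ne_top hz (hp z)
  have hprox : ∀ n, IsProxPoint f (1 / (2 * γseq n)) (x n) (x (n + 1)) :=
    fun n => hxs n ▸ hJ _ (hγseq n) _
  obtain ⟨N, rfl⟩ : ∃ N, n = N + 1 := ⟨n - 1, by unfold betaRate at hn; omega⟩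
  have hSpos : 0 < ∑ i ∈ range (N + 1), γseq i :=
    sum_pos (fun i _ => hγseq i) nonempty_range_add_one
  have hdist : dist (x 0) p ^ 2 ≤ b ^ 2 := hx0 ▸ pow_le_pow_left₀ dist_nonneg hxb 2
  have hgap : (f (x (N + 1))).toReal - (f p).toReal ≤ 1 / (k + 1) :=
    le_one_div_of_mul_two_mul_le hSpos
      ((proximalPoint_toReal_sub_mul_sum_le hcat hconv hbot hγseq hprox hfp _).trans hdist)
      (le_sum_of_betaRate_le (fun i => (hγseq i).le) hθ hn)
  calc f (x (N + 1)) = ((f (x (N + 1))).toReal : EReal) :=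
        (EReal.coe_toReal ((hprox N).ne_top hfp) (hbot _)).symm
    _ ≤ (((f p).toReal + 1 / (k + 1) : ℝ) : EReal) := EReal.coe_le_coe_iff.mpr (by linarith)
    _ = f p + ((1 / ((k:ℝ) + 1) : ℝ) : EReal) := by
        rw [EReal.coe_add, EReal.coe_toReal hfp (hbot p)]
    _ ≤ f y + ((1 / ((k:ℝ) + 1) : ℝ) : EReal) := by gcongr; exact hp y

/-- β is a rate of asymptotic regularity of the proximal point
algorithm with respect to the approximations Argmin_k(f): for n ≥ β(k), the
iterate x_n is a k-approximate minimizer of f. -/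
theorem stmt13
    {X : Type*} [MetricSpace X] [CompleteSpace X]
    -- geodesic convex-combination structure: `w x y t` is the point `(1-t)x + ty`
    (w : X → X → ℝ → X)
    (hw1 : ∀ x y : X, ∀ t ∈ Set.Icc (0:ℝ) 1, dist x (w x y t) = t * dist x y)
    (hw2 : ∀ x y : X, ∀ t ∈ Set.Icc (0:ℝ) 1, dist y (w x y t) = (1-t) * dist x y)
    -- the CAT(0) inequality
    (hcat : ∀ x y z : X, ∀ t ∈ Set.Icc (0:ℝ) 1,
      dist z (w x y t)^2 ≤ (1-t) * dist z x^2 + t * dist z y^2 - t*(1-t) * dist x y^2)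
    (f : X → EReal)
    -- f is convex, lower semicontinuous and proper (never -∞, somewhere finite)
    (hconv : ∀ x y : X, ∀ t ∈ Set.Icc (0:ℝ) 1,
      f (w x y t) ≤ ((1 - t : ℝ) : EReal) * f x + ((t : ℝ) : EReal) * f y)
    (hlsc : LowerSemicontinuous f)
    (hproper : ∃ x, f x ≠ ⊤) (hbot : ∀ x, f x ≠ ⊥)
    -- J is the resolvent: J γ x minimizes y ↦ f(y) + (1/(2γ)) d(x,y)², uniquely
    (J : ℝ → X → X)
    (hJ : ∀ γ : ℝ, 0 < γ → ∀ x y : X,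
      f (J γ x) + ((1/(2*γ) * dist x (J γ x)^2 : ℝ) : EReal) ≤
        f y + ((1/(2*γ) * dist x y^2 : ℝ) : EReal))
    (hJuniq : ∀ γ : ℝ, 0 < γ → ∀ x m : X,
      (∀ y, f m + ((1/(2*γ) * dist x m^2 : ℝ) : EReal) ≤
        f y + ((1/(2*γ) * dist x y^2 : ℝ) : EReal)) → m = J γ x)
    (p : X) (hp : ∀ y, f p ≤ f y)
    (x0 : X) (b : ℝ) (hb : 0 < b) (hxb : dist x0 p ≤ b)
    (γseq : ℕ → ℝ) (hγseq : ∀ n, 0 < γseq n)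
    (θ : ℕ → ℕ) (hθ : ∀ P : ℕ, (P:ℝ) ≤ ∑ i ∈ Finset.range (θ P + 1), γseq i)
    (x : ℕ → X) (hx0 : x 0 = x0) (hxs : ∀ n, x (n+1) = J (γseq n) (x n)) :
    ∀ k : ℕ, ∀ n : ℕ, betaRate θ b k ≤ n →
      ∀ y : X, f (x n) ≤ f y + ((1 / ((k:ℝ)+1) : ℝ) : EReal) :=
  stmt13_general w hcat f hconv hproper hbot J hJ p hp x0 b hxb γseq hγseq θ hθ x hx0 hxs
end
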